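/- arXiv:1506.08406 — 3 statements merged into one kernel-verified Lean document; each statement's English description precedes it below -/
import Mathlib

section
/- Let a, b, c > 0. Then a² + b² + c² − 2ab − 2bc − 2ca < 0 if and only if all three strict triangle-type inequalities hold: √a < √b + √c, √b < √a + √c, and √c < √a + √b. -/
theorem stmt_1 (a b c : ℝ) (ha : 0 < a) (hb : 0 < b) (hc : 0 < c) :
    a ^ 2 + b ^ 2 + c ^ 2 - 2 * a * b - 2 * b * c - 2 * c * a < 0 ↔
      (Real.sqrt a < Real.sqrt b + Real.sqrt c ∧
       Real.sqrt b < Real.sqrt a + Real.sqrt c ∧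
       Real.sqrt c < Real.sqrt a + Real.sqrt b) := by
  set x := Real.sqrt a with hxd
  set y := Real.sqrt b with hyd
  set z := Real.sqrt c with hzd
  have hx : 0 < x := Real.sqrt_pos.mpr ha
  have hy : 0 < y := Real.sqrt_pos.mpr hb
  have hz : 0 < z := Real.sqrt_pos.mpr hc
  have hax : a = x ^ 2 := (Real.sq_sqrt ha.le).symm
  have hby : b = y ^ 2 := (Real.sq_sqrt hb.le).symm
  have hcz : c = z ^ 2 := (Real.sq_sqrt hc.le).symm
  rw [hax, hby, hcz]
  constructor
  · intro h
    refine ⟨?_, ?_, ?_⟩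
    · by_contra hcon
      push_neg at hcon
      have f1 : (0:ℝ) ≤ x - y - z := by linarith
      have f2 : (0:ℝ) < x - y + z := by linarith
      have f3 : (0:ℝ) < x + y - z := by linarith
      nlinarith [mul_nonneg (mul_nonneg (mul_nonneg (by linarith : (0:ℝ) ≤ x+y+z) f1) f2.le) f3.le]
    · by_contra hcon
      push_neg at hcon
      have f1 : (0:ℝ) ≤ y - x - z := by linarith
      have f2 : (0:ℝ) < y - x + z := by linarith
      have f3 : (0:ℝ) < y + x - z := by linarith
      nlinarith [mul_nonneg (mul_nonneg (mul_nonneg (by linarith : (0:ℝ) ≤ x+y+z) f1) f2.le) f3.le]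
    · by_contra hcon
      push_neg at hcon
      have f1 : (0:ℝ) ≤ z - x - y := by linarith
      have f2 : (0:ℝ) < z - x + y := by linarith
      have f3 : (0:ℝ) < z + x - y := by linarith
      nlinarith [mul_nonneg (mul_nonneg (mul_nonneg (by linarith : (0:ℝ) ≤ x+y+z) f1) f2.le) f3.le]
  · rintro ⟨h1, h2, h3⟩
    nlinarith [mul_pos (mul_pos (add_pos (add_pos hx hy) hz) (by linarith : (0:ℝ) < y + z - x)) (mul_pos (by linarith : (0:ℝ) < x + z - y) (by linarith : (0:ℝ) < x + y - z))]
end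

section
/- Let a, b, c ≥ 0 with (a,b,c) ≠ (0,0,0). Then a² + b² + c² − 2ab − 2bc − 2ca = 0 if and only if one of the following holds: √a = √b + √c, or √b = √c + √a, or √c = √a + √b. -/
theorem stmt_2 (a b c : ℝ) (ha : 0 ≤ a) (hb : 0 ≤ b) (hc : 0 ≤ c)
    (habc : (a, b, c) ≠ (0, 0, 0)) :
    a ^ 2 + b ^ 2 + c ^ 2 - 2 * a * b - 2 * b * c - 2 * c * a = 0 ↔
      (Real.sqrt a = Real.sqrt b + Real.sqrt c ∨
       Real.sqrt b = Real.sqrt c + Real.sqrt a ∨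
       Real.sqrt c = Real.sqrt a + Real.sqrt b) := by
  set x := Real.sqrt a with hxdef
  set y := Real.sqrt b with hydef
  set z := Real.sqrt c with hzdef
  have hxa : x ^ 2 = a := Real.sq_sqrt ha
  have hyb : y ^ 2 = b := Real.sq_sqrt hb
  have hzc : z ^ 2 = c := Real.sq_sqrt hc
  have hx : 0 ≤ x := Real.sqrt_nonneg a
  have hy : 0 ≤ y := Real.sqrt_nonneg b
  have hz : 0 ≤ z := Real.sqrt_nonneg c
  have hs : 0 < x + y + z := by
    rcases lt_or_eq_of_le ha with h | h
    · have : 0 < x := Real.sqrt_pos.mpr h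
      linarith
    rcases lt_or_eq_of_le hb with h' | h'
    · have : 0 < y := Real.sqrt_pos.mpr h'
      linarith
    rcases lt_or_eq_of_le hc with h'' | h''
    · have : 0 < z := Real.sqrt_pos.mpr h''
      linarith
    · exact absurd (by simp [← h, ← h', ← h'']) habc
  have hid : a ^ 2 + b ^ 2 + c ^ 2 - 2 * a * b - 2 * b * c - 2 * c * a =
      -((x + y + z) * ((y + z - x) * ((z + x - y) * (x + y - z)))) := by
    rw [← hxa, ← hyb, ← hzc]; ring
  constructor
  · intro h
    rw [hid, neg_eq_zero] at h
    rcases mul_eq_zero.mp h with h1 | h2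
    · linarith
    rcases mul_eq_zero.mp h2 with h3 | h4
    · left; linarith
    rcases mul_eq_zero.mp h4 with h5 | h6
    · right; left; linarith
    · right; right; linarith
  · rintro (h | h | h) <;> rw [hid] <;>
      · rw [neg_eq_zero]
        apply mul_eq_zero.mpr
        right
        apply mul_eq_zero.mpr
        first
          | (left; linarith)
          | (right; apply mul_eq_zero.mpr; first | (left; linarith) | (right; linarith))
end

section
/- Let k ≥ 1 and let A be a 4k×4k antisymmetric matrix whose rows/columns are grouped into 2k consecutive pairs indexed by B = {1,…,2k}. Let Y_{2k}(1) be the block-diagonal antisymmetric matrix with 2k diagonal 2×2 blocks equal to [[0,1],[−1,0]]. For I ⊆ B, let A_I denote the principal submatrix of A consisting of the row/column pairs indexed by I (with Pf(A_∅) = 1). Then Pf(Y_{2k}(1) + A) = Σ_{I ⊆ B} Pf(A_I). -/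
/-- The Pfaffian of a `2n × 2n` real matrix, defined by the sum-over-permutations
formula `Pf(A) = (1/(2^n n!)) ∑_σ sgn(σ) ∏_i A(σ(2i), σ(2i+1))`. -/
noncomputable def pfaffian {n : ℕ} (A : Matrix (Fin (2 * n)) (Fin (2 * n)) ℝ) : ℝ :=
  (1 / ((2 : ℝ) ^ n * n.factorial)) *
    ∑ σ : Equiv.Perm (Fin (2 * n)), (Equiv.Perm.sign σ : ℝ) *
      ∏ i : Fin n, A (σ ⟨2 * i.val, by have := i.isLt; omega⟩)
        (σ ⟨2 * i.val + 1, by have := i.isLt; omega⟩)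

/-- The block-diagonal antisymmetric matrix `Y_{2k}(1)` with `2k` diagonal
`2 × 2` blocks `[[0, 1], [-1, 0]]`. -/
def Yblock (k : ℕ) : Matrix (Fin (2 * (2 * k))) (Fin (2 * (2 * k))) ℝ :=
  fun i j =>
    if i.val % 2 = 0 ∧ j.val = i.val + 1 then 1
    else if j.val % 2 = 0 ∧ i.val = j.val + 1 then -1 else 0

/-- The embedding of the rows/columns of the principal submatrix `A_I`, consisting of
the row/column pairs `{2i, 2i+1}` for `i ∈ I` (taken in increasing order). -/
def pairEmb {k : ℕ} (I : Finset (Fin (2 * k))) (i : Fin (2 * I.card)) :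
    Fin (2 * (2 * k)) :=
  ⟨2 * ((I.orderIsoOfFin rfl ⟨i.val / 2, by have := i.isLt; omega⟩).1).val + i.val % 2, by
    have h1 := ((I.orderIsoOfFin rfl ⟨i.val / 2, by have := i.isLt; omega⟩).1).isLt
    omega⟩


/-!
Write `E_b` for the matrix carrying the block `[[0, 1], [-1, 0]]` on the pair `b` and zeros
elsewhere, so that `Y_{2k}(1) = ∑_b E_b`. The key identity is
`Pf(M + E_b) = Pf(M) + Pf(M with the pair b deleted)`. In the permutation expansion of the
Pfaffian, an entry of `E_b` occupies both positions of the pair `b`, so it occurs in at most one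
factor of each term. Relabelling the pairs by a permutation of even sign moves that factor to the
pair `b`; the terms that use it are then `2 · #pairs` copies of the expansion of the smaller
Pfaffian, which is exactly the change in normalisation. Adding the blocks of `Y` one at a time
gives `Pf(∑_{b ∈ S} E_b + A) = ∑_{T ⊆ S} Pf(A_{B ∖ T})`.
-/

open Finset Equiv Equiv.Perm Matrix

section BlockDiagonal

variable {m n o β α : Type*} [DecidableEq o] [Zero α]

theorem snd_eq_of_blockDiagonal_single_apply_ne_zero {a : o} {d : Matrix m n α} {x : m × o}
    {y : n × o} (h : blockDiagonal (Pi.single a d) x y ≠ 0) : x.2 = a ∧ y.2 = a := by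
  rw [blockDiagonal_apply] at h
  split_ifs at h with hxy
  · by_contra hne
    exact h (by rw [Pi.single_apply, if_neg fun hx => hne ⟨hx, hxy ▸ hx⟩]; rfl)
  · exact absurd rfl h

theorem blockDiagonal_single_submatrix_prodMap [DecidableEq β] {g : β → o} (hg : g.Injective)
    (a : β) (d : Matrix m n α) :
    (blockDiagonal (Pi.single (g a) d)).submatrix (Prod.map id g) (Prod.map id g) =
      blockDiagonal (Pi.single a d) := by
  ext ⟨i, c⟩ ⟨j, c'⟩
  simp [blockDiagonal_apply, Pi.single_apply, hg.eq_iff]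

end BlockDiagonal

theorem prod_add_eq_add_sum_mul_prod_erase {ι R : Type*} [Fintype ι] [DecidableEq ι]
    [CommSemiring R] (f g : ι → R) (hg : ∀ i j, i ≠ j → g i = 0 ∨ g j = 0) :
    ∏ i, (f i + g i) = ∏ i, f i + ∑ i, g i * ∏ j ∈ univ.erase i, f j := by
  by_cases hzero : ∀ i, g i = 0
  · simp [hzero]
  obtain ⟨i, hi⟩ := not_forall.mp hzero
  have hother : ∀ j ∈ univ.erase i, g j = 0 := fun j hj =>
    (hg j i (ne_of_mem_erase hj)).resolve_right hi
  rw [← mul_prod_erase univ _ (mem_univ i), ← mul_prod_erase univ f (mem_univ i),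
    sum_eq_single_of_mem i (mem_univ i) fun j _ hj => by
      simp [hother j (mem_erase.2 ⟨hj, mem_univ j⟩)],
    prod_congr rfl fun j hj => by rw [hother j hj, add_zero]]
  ring

theorem prod_erase_none {γ M : Type*} [Fintype γ] [DecidableEq γ] [CommMonoid M]
    (f : Option γ → M) : ∏ c ∈ univ.erase none, f c = ∏ c, f (some c) := by
  rw [← map_some_eraseNone, prod_map]
  exact prod_congr (by ext; simp) fun _ _ => rfl

def prodOptionEquiv (α γ : Type*) : α × Option γ ≃ α ⊕ α × γ where
  toFun
    | (i, none) => .inl i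
    | (i, some c) => .inr (i, c)
  invFun
    | .inl i => (i, none)
    | .inr (i, c) => (i, some c)
  left_inv := by rintro ⟨i, _ | c⟩ <;> rfl
  right_inv := by rintro (i | ⟨i, c⟩) <;> rfl

/-- The permutation acting by `p.1` on the pair `none` and by `p.2` on the others. -/
def prodOptionPermCongr {γ : Type*} (p : Perm (Fin 2) × Perm (Fin 2 × γ)) :
    Perm (Fin 2 × Option γ) :=
  (prodOptionEquiv (Fin 2) γ).symm.permCongr (sumCongrHom _ _ p)

theorem prodOptionPermCongr_injective {γ : Type*} :
    (prodOptionPermCongr : Perm (Fin 2) × Perm (Fin 2 × γ) → _).Injective :=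
  (EquivLike.injective (prodOptionEquiv (Fin 2) γ).symm.permCongr).comp sumCongrHom_injective

section PfaffianSum

variable {R : Type*} [CommRing R] {β γ ι : Type*} [Fintype β] [DecidableEq β] [Fintype γ]
  [DecidableEq γ] [Fintype ι] [DecidableEq ι]

def symplecticBlock : Matrix (Fin 2) (Fin 2) R := !![0, 1; -1, 0]

theorem sum_sign_mul_symplecticBlock :
    ∑ s : Perm (Fin 2), (sign s : R) * symplecticBlock (s 0) (s 1) = 2 := by
  rw [show (univ : Finset (Perm (Fin 2))) = {1, swap 0 1} by decide, sum_pair (by decide)]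
  norm_num [symplecticBlock]

/-- The pairs of rows are `(0, b), (1, b)` for `b : β`; this index order is the one of
`Matrix.blockDiagonal`. -/
def pfaffianSum (M : Matrix (Fin 2 × β) (Fin 2 × β) R) : R :=
  ∑ σ : Perm (Fin 2 × β), (sign σ : R) * ∏ b, M (σ (0, b)) (σ (1, b))

theorem pfaffianSum_submatrix_equiv (f : Fin 2 × β ≃ ι) (M : Matrix ι ι R) :
    pfaffianSum (M.submatrix f f) =
      ∑ τ : Perm ι, (sign τ : R) * ∏ b, M (τ (f (0, b))) (τ (f (1, b))) :=
  Fintype.sum_equiv f.permCongr _ _ fun σ => by simp [permCongr_apply, sign_permCongr]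

theorem pfaffianSum_submatrix_prodCongr (e : γ ≃ β) (M : Matrix (Fin 2 × β) (Fin 2 × β) R) :
    pfaffianSum (M.submatrix (prodCongr (.refl _) e) (prodCongr (.refl _) e)) =
      pfaffianSum M := by
  rw [pfaffianSum_submatrix_equiv]
  exact Fintype.sum_congr _ _ fun σ => congrArg _ (Fintype.prod_equiv e _ _ fun c => rfl)

theorem sign_prodCongrRight_const (e : Perm β) :
    sign (prodCongrRight fun _ : Fin 2 => e) = 1 := by
  simp [sign_prodCongrRight]

theorem sum_sign_mul_mul_prodCongrRight (e : Perm β) (Φ : Perm (Fin 2 × β) → R) :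
    ∑ σ : Perm (Fin 2 × β), (sign σ : R) * Φ (σ * prodCongrRight fun _ => e) =
      ∑ σ : Perm (Fin 2 × β), (sign σ : R) * Φ σ :=
  Fintype.sum_equiv (Equiv.mulRight (prodCongrRight fun _ => e)) _ _ fun σ => by
    simp [sign_prodCongrRight_const]

theorem prod_add_blockDiagonal_single (a : β) (σ : Perm (Fin 2 × β))
    (M : Matrix (Fin 2 × β) (Fin 2 × β) R) :
    ∏ b, (M + blockDiagonal (Pi.single a symplecticBlock) :) (σ (0, b)) (σ (1, b)) =
      ∏ b, M (σ (0, b)) (σ (1, b)) +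
        ∑ b, blockDiagonal (Pi.single a symplecticBlock) (σ (0, b)) (σ (1, b)) *
          ∏ c ∈ univ.erase b, M (σ (0, c)) (σ (1, c)) := by
  refine prod_add_eq_add_sum_mul_prod_erase _ _ fun b c hbc => ?_
  by_contra! hne
  obtain ⟨hb0, hb1⟩ := snd_eq_of_blockDiagonal_single_apply_ne_zero hne.1
  obtain ⟨hc0, -⟩ := snd_eq_of_blockDiagonal_single_apply_ne_zero hne.2
  -- `σ (0, b)`, `σ (1, b)`, `σ (0, c)` would be three distinct points of the two-point block `a`
  have hinj : ∀ x y, (σ x).2 = a → (σ y).2 = a → (σ x).1 = (σ y).1 → x = y :=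
    fun x y hx hy h => σ.injective (Prod.ext h (hx.trans hy.symm))
  have hpigeon : ∀ u v w : Fin 2, u = v ∨ u = w ∨ v = w := by decide
  rcases hpigeon (σ (0, b)).1 (σ (1, b)).1 (σ (0, c)).1 with h | h | h
  · simpa using hinj _ _ hb0 hb1 h
  · exact hbc (congrArg Prod.snd (hinj _ _ hb0 hc0 h))
  · simpa using hinj _ _ hb1 hc0 h

theorem pfaffianSum_add_blockDiagonal_single (a : β) (M : Matrix (Fin 2 × β) (Fin 2 × β) R) :
    pfaffianSum (M + blockDiagonal (Pi.single a symplecticBlock)) =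
      pfaffianSum M + Fintype.card β * ∑ σ : Perm (Fin 2 × β), (sign σ : R) *
        (blockDiagonal (Pi.single a symplecticBlock) (σ (0, a)) (σ (1, a)) *
          ∏ c ∈ univ.erase a, M (σ (0, c)) (σ (1, c))) := by
  have hslot : ∀ b, ∑ σ : Perm (Fin 2 × β), (sign σ : R) *
      (blockDiagonal (Pi.single a symplecticBlock) (σ (0, b)) (σ (1, b)) *
        ∏ c ∈ univ.erase b, M (σ (0, c)) (σ (1, c))) =
      ∑ σ : Perm (Fin 2 × β), (sign σ : R) *
      (blockDiagonal (Pi.single a symplecticBlock) (σ (0, a)) (σ (1, a)) *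
        ∏ c ∈ univ.erase a, M (σ (0, c)) (σ (1, c))) := by
    intro b
    rw [← sum_sign_mul_mul_prodCongrRight (swap a b)]
    refine Fintype.sum_congr _ _ fun σ => ?_
    simp only [Perm.mul_apply, prodCongrRight_apply, swap_apply_right]
    congr 2
    exact prod_equiv (swap a b) (by simp [swap_apply_eq_iff]) fun _ _ => rfl
  simp only [pfaffianSum, prod_add_blockDiagonal_single, mul_add, sum_add_distrib, mul_sum]
  rw [sum_comm, sum_congr rfl fun b _ => hslot b, sum_const, card_univ, nsmul_eq_mul, mul_sum]

theorem mem_range_prodOptionPermCongr {σ : Perm (Fin 2 × Option γ)}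
    (hσ : blockDiagonal (Pi.single none symplecticBlock) (σ (0, none)) (σ (1, none)) ≠
      (0 : R)) :
    σ ∈ Set.range prodOptionPermCongr := by
  have hnone : ∀ i, (σ (i, none)).2 = none := by
    have := snd_eq_of_blockDiagonal_single_apply_ne_zero hσ
    exact fun i => by fin_cases i <;> simp [this]
  obtain ⟨p, hp⟩ :=
    mem_sumCongrHom_range_of_perm_mapsTo_inl (σ := (prodOptionEquiv (Fin 2) γ).permCongr σ) <| by
      rintro _ ⟨i, rfl⟩
      refine ⟨(σ (i, none)).1, ?_⟩
      rw [permCongr_apply, show (prodOptionEquiv (Fin 2) γ).symm (.inl i) = (i, none) from rfl,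
        ← Prod.mk.eta (p := σ (i, none)), hnone]
      rfl
  exact ⟨p, by simp only [prodOptionPermCongr, hp, ← permCongr_symm, symm_apply_apply]⟩

theorem sum_sign_mul_blockDiagonal_single_none
    (M : Matrix (Fin 2 × Option γ) (Fin 2 × Option γ) R) :
    ∑ σ : Perm (Fin 2 × Option γ), (sign σ : R) *
      (blockDiagonal (Pi.single none symplecticBlock) (σ (0, none)) (σ (1, none)) *
        ∏ c ∈ univ.erase none, M (σ (0, c)) (σ (1, c))) =
      2 * pfaffianSum (M.submatrix (Prod.map id some) (Prod.map id some)) := by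
  set M' := M.submatrix (Prod.map id some) (Prod.map id some) with hM'
  have hvalue : ∀ p : Perm (Fin 2) × Perm (Fin 2 × γ),
      (sign p.1 : R) * symplecticBlock (p.1 0) (p.1 1) *
        ((sign p.2 : R) * ∏ c, M' (p.2 (0, c)) (p.2 (1, c))) =
      (sign (prodOptionPermCongr p) : R) *
        (blockDiagonal (Pi.single none symplecticBlock)
          (prodOptionPermCongr p (0, none)) (prodOptionPermCongr p (1, none)) *
          ∏ c ∈ univ.erase none,
            M (prodOptionPermCongr p (0, c)) (prodOptionPermCongr p (1, c))) := by
    rintro ⟨s, t⟩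
    rw [prod_erase_none]
    simp only [prodOptionPermCongr, prodOptionEquiv, sumCongrHom_apply, permCongr_apply, symm_mk,
      coe_fn_mk, Equiv.sumCongr_apply, Sum.map_inl, Sum.map_inr, sign_permCongr, sign_sumCongr,
      Units.val_mul, Int.cast_mul, blockDiagonal_apply, if_pos, Pi.single_eq_same, hM',
      submatrix_apply, Prod.map, id_eq]
    ring
  calc _ = ∑ p : Perm (Fin 2) × Perm (Fin 2 × γ),
        (sign p.1 : R) * symplecticBlock (p.1 0) (p.1 1) *
          ((sign p.2 : R) * ∏ c, M' (p.2 (0, c)) (p.2 (1, c))) :=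
        (Fintype.sum_of_injective _ prodOptionPermCongr_injective _ _ (fun σ hσ => by
          by_contra hne
          exact hσ (mem_range_prodOptionPermCongr
            (left_ne_zero_of_mul (right_ne_zero_of_mul hne)))) hvalue).symm
    _ = 2 * pfaffianSum M' := by
        rw [Fintype.sum_prod_type]
        dsimp only
        rw [← sum_mul_sum, sum_sign_mul_symplecticBlock]
        rfl

end PfaffianSum

section PairPfaffian

variable {K : Type*} [Field K] {β γ : Type*} [Fintype β] [DecidableEq β] [Fintype γ]
  [DecidableEq γ]

def pairPfaffian (M : Matrix (Fin 2 × β) (Fin 2 × β) K) : K :=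
  1 / (2 ^ Fintype.card β * (Fintype.card β).factorial) * pfaffianSum M

theorem pairPfaffian_submatrix_prodCongr (e : γ ≃ β)
    (M : Matrix (Fin 2 × β) (Fin 2 × β) K) :
    pairPfaffian (M.submatrix (prodCongr (.refl _) e) (prodCongr (.refl _) e)) =
      pairPfaffian M := by
  rw [pairPfaffian, pairPfaffian, pfaffianSum_submatrix_prodCongr, Fintype.card_congr e]

theorem pairPfaffian_add_blockDiagonal_single_none [CharZero K]
    (M : Matrix (Fin 2 × Option γ) (Fin 2 × Option γ) K) :
    pairPfaffian (M + blockDiagonal (Pi.single none symplecticBlock)) =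
      pairPfaffian M + pairPfaffian (M.submatrix (Prod.map id some) (Prod.map id some)) := by
  simp only [pairPfaffian, pfaffianSum_add_blockDiagonal_single,
    sum_sign_mul_blockDiagonal_single_none, Fintype.card_option, Nat.factorial_succ]
  have hn : (Fintype.card γ + 1 : K) ≠ 0 := Nat.cast_add_one_ne_zero _
  have hfact : ((Fintype.card γ).factorial : K) ≠ 0 :=
    Nat.cast_ne_zero.2 (Nat.factorial_ne_zero _)
  push_cast
  field_simp
  ring

end PairPfaffian

section PairPfaffianOn

variable {K : Type*} [Field K] {β γ : Type*} [DecidableEq β] [Fintype γ] [DecidableEq γ]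

/-- `Pf(M_I)` in the notation of the statement. -/
def pairPfaffianOn (I : Finset β) (M : Matrix (Fin 2 × β) (Fin 2 × β) K) : K :=
  pairPfaffian
    (M.submatrix (Prod.map id (↑)) (Prod.map id (↑)) : Matrix (Fin 2 × I) (Fin 2 × I) K)

theorem pairPfaffianOn_eq_pairPfaffian_submatrix (I : Finset β) (e : γ ≃ I)
    (M : Matrix (Fin 2 × β) (Fin 2 × β) K) :
    pairPfaffianOn I M =
      pairPfaffian
        (M.submatrix (Prod.map id (Subtype.val ∘ e)) (Prod.map id (Subtype.val ∘ e))) := by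
  rw [pairPfaffianOn, ← pairPfaffian_submatrix_prodCongr e]
  rfl

theorem pairPfaffianOn_insert_add_blockDiagonal_single [CharZero K] {b : β} {I : Finset β}
    (hb : b ∉ I) (M : Matrix (Fin 2 × β) (Fin 2 × β) K) :
    pairPfaffianOn (insert b I) (M + blockDiagonal (Pi.single b symplecticBlock)) =
      pairPfaffianOn (insert b I) M + pairPfaffianOn I M := by
  set e := (subtypeInsertEquivOption hb).symm
  have hE : (blockDiagonal (Pi.single b symplecticBlock)).submatrix
      (Prod.map id (Subtype.val ∘ e)) (Prod.map id (Subtype.val ∘ e)) =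
        blockDiagonal (Pi.single none (symplecticBlock : Matrix (Fin 2) (Fin 2) K)) :=
    blockDiagonal_single_submatrix_prodMap (Subtype.val_injective.comp e.injective) none _
  rw [pairPfaffianOn_eq_pairPfaffian_submatrix _ e, pairPfaffianOn_eq_pairPfaffian_submatrix _ e,
    submatrix_add, Pi.add_apply, Pi.add_apply, hE, pairPfaffian_add_blockDiagonal_single_none]
  rfl

theorem pairPfaffianOn_sum_blockDiagonal_single_add [CharZero K]
    (A : Matrix (Fin 2 × β) (Fin 2 × β) K) {S I : Finset β} (hSI : S ⊆ I) :
    pairPfaffianOn I (∑ b ∈ S, blockDiagonal (Pi.single b symplecticBlock) + A) =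
      ∑ T ∈ S.powerset, pairPfaffianOn (I \ T) A := by
  induction S using Finset.induction_on generalizing I with
  | empty => simp
  | insert b S hbS ih =>
    obtain ⟨J, hbJ, rfl⟩ : ∃ J, b ∉ J ∧ I = insert b J :=
      ⟨I.erase b, notMem_erase b I, (insert_erase (hSI (mem_insert_self b S))).symm⟩
    have hSJ : S ⊆ J := fun x hx =>
      (mem_insert.1 (hSI (mem_insert_of_mem hx))).resolve_left fun h => hbS (h ▸ hx)
    rw [sum_insert hbS, add_comm (blockDiagonal _), add_right_comm,
      pairPfaffianOn_insert_add_blockDiagonal_single hbJ, ih (hSJ.trans (subset_insert b J)),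
      ih hSJ, sum_powerset_insert hbS]
    simp only [insert_sdiff_insert, sdiff_insert_of_notMem hbJ]

end PairPfaffianOn

def finPairEquiv (n : ℕ) : Fin 2 × Fin n ≃ Fin (2 * n) :=
  (prodComm _ _).trans (finProdFinEquiv.trans (finCongr (mul_comm n 2)))

@[simp]
theorem finPairEquiv_apply_val {n : ℕ} (r : Fin 2) (i : Fin n) :
    (finPairEquiv n (r, i) : ℕ) = r + 2 * i := by
  simp [finPairEquiv, finProdFinEquiv]

theorem pfaffian_eq_pairPfaffian {n : ℕ} (M : Matrix (Fin (2 * n)) (Fin (2 * n)) ℝ) :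
    pfaffian M = pairPfaffian (M.submatrix (finPairEquiv n) (finPairEquiv n)) := by
  rw [pairPfaffian, pfaffianSum_submatrix_equiv, Fintype.card_fin, pfaffian]
  congr 1
  refine sum_congr rfl fun σ _ => congrArg _ (prod_congr rfl fun i _ => ?_)
  congr 2 <;> ext <;> simp [add_comm]

theorem Yblock_submatrix_finPairEquiv (k : ℕ) :
    (Yblock k).submatrix (finPairEquiv _) (finPairEquiv _) =
      ∑ b, blockDiagonal (Pi.single b symplecticBlock) := by
  simp_rw [← blockDiagonalAddMonoidHom_apply, ← map_sum, univ_sum_single]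
  ext ⟨r, i⟩ ⟨s, j⟩
  simp only [submatrix_apply, Yblock, finPairEquiv_apply_val, Nat.add_mul_mod_self_left,
    blockDiagonalAddMonoidHom_apply, blockDiagonal_apply, Fin.ext_iff]
  fin_cases r <;> fin_cases s <;>
    simp only [symplecticBlock, of_apply, cons_val', cons_val_zero, cons_val_one, cons_val_fin_one,
      Fin.zero_eta, Fin.mk_one, Fin.isValue, Nat.zero_mod, Nat.mod_succ, zero_add, one_ne_zero,
      true_and, false_and, ite_self, if_false] <;> split_ifs <;> first | rfl | omega

theorem pfaffian_submatrix_pairEmb {k : ℕ} (I : Finset (Fin (2 * k)))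
    (A : Matrix (Fin (2 * (2 * k))) (Fin (2 * (2 * k))) ℝ) :
    pfaffian (A.submatrix (pairEmb I) (pairEmb I)) =
      pairPfaffianOn I (A.submatrix (finPairEquiv _) (finPairEquiv _)) := by
  rw [pfaffian_eq_pairPfaffian,
    pairPfaffianOn_eq_pairPfaffian_submatrix I (I.orderIsoOfFin rfl).toEquiv]
  congr 1
  ext ⟨r, i⟩ ⟨s, j⟩
  simp only [submatrix_apply, pairEmb, finPairEquiv_apply_val, Nat.add_mul_div_left _ _ two_pos,
    Nat.div_eq_of_lt r.isLt, Nat.div_eq_of_lt s.isLt, zero_add, Fin.eta, coe_orderIsoOfFin_apply,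
    Nat.add_mul_mod_self_left, RelIso.coe_fn_toEquiv, Prod.map_apply, id_eq, Function.comp_apply]
  congr 1 <;> ext <;> simp [Nat.mod_eq_of_lt r.isLt, Nat.mod_eq_of_lt s.isLt, add_comm]

theorem stmt_12_general {k : ℕ}
    (A : Matrix (Fin (2 * (2 * k))) (Fin (2 * (2 * k))) ℝ) :
    pfaffian (n := 2 * k) (Yblock k + A) =
      ∑ I ∈ (Finset.univ : Finset (Fin (2 * k))).powerset,
        pfaffian (n := I.card) (fun i j => A (pairEmb I i) (pairEmb I j)) := by
  set A' := A.submatrix (finPairEquiv _) (finPairEquiv _)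
  calc pfaffian (Yblock k + A)
      = pairPfaffianOn univ (∑ b, blockDiagonal (Pi.single b symplecticBlock) + A') := by
        rw [pfaffian_eq_pairPfaffian,
          pairPfaffianOn_eq_pairPfaffian_submatrix univ (subtypeUnivEquiv mem_univ).symm,
          submatrix_add, Pi.add_apply, Pi.add_apply, Yblock_submatrix_finPairEquiv]
        rfl
    _ = ∑ T ∈ univ.powerset, pairPfaffianOn (univ \ T) A' :=
        pairPfaffianOn_sum_blockDiagonal_single_add A' (subset_refl _)
    _ = ∑ I ∈ univ.powerset, pairPfaffianOn I A' := by
        simp only [powerset_univ, ← compl_eq_univ_sdiff]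
        exact Equiv.sum_comp (compl_involutive.toPerm _) fun I => pairPfaffianOn I A'
    _ = _ := sum_congr rfl fun I _ => (pfaffian_submatrix_pairEmb I A).symm

theorem stmt_12 {k : ℕ} (hk : 1 ≤ k)
    (A : Matrix (Fin (2 * (2 * k))) (Fin (2 * (2 * k))) ℝ)
    (hA : A.transpose = -A) :
    pfaffian (n := 2 * k) (Yblock k + A) =
      ∑ I ∈ (Finset.univ : Finset (Fin (2 * k))).powerset,
        pfaffian (n := I.card) (fun i j => A (pairEmb I i) (pairEmb I j)) :=
  stmt_12_general A
end
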